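/- arXiv:2411.12601 — 4 statements merged into one kernel-verified Lean document; each statement's English description precedes it below -/
import Mathlib

section
/- Let u be a minimizer of F_H^{con} and let x_i∈D(u)∖L. Then there exist two hyperedges e_k,e_l∈E, both containing x_i, such that u(x_i)=max_{x_j∈e_k}u(x_j) and u(x_i)=min_{x_j∈e_l}u(x_j). -/
open Finset

/-- A finite hypergraph on vertex set `V` with `m` hyperedges:
each hyperedge is a nonempty finite set of vertices and carries a positive weight. -/
structure WHypergraph (V : Type*) [Fintype V] (m : ℕ) where
  e : Fin m → Finset V
  w : Fin m → ℝ
  e_nonempty : ∀ k, (e k).Nonempty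
  w_pos : ∀ k, 0 < w k

variable {V : Type*} [Fintype V] {m : ℕ}

/-- Maximal oscillation of `u` on the hyperedge `e k`:
`max_{x_i, x_j ∈ e_k} |u x_i - u x_j|`. -/
noncomputable def osc (H : WHypergraph V m) (u : V → ℝ) (k : Fin m) : ℝ :=
  (H.e k ×ˢ H.e k).sup' ((H.e_nonempty k).product (H.e_nonempty k))
    (fun q => |u q.1 - u q.2|)

/-- The hypergraph p-Laplacian regularizer
`F_H(u) = ∑ k w_k (max_{x_i,x_j ∈ e_k} |u x_i - u x_j|)^p`. -/
noncomputable def FH (H : WHypergraph V m) (p : ℝ) (u : V → ℝ) : ℝ :=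
  ∑ k : Fin m, H.w k * (osc H u k) ^ p

/-- `u` is admissible for the labeled set `L` with labels `y`. -/
def Admissible (L : Finset V) (y u : V → ℝ) : Prop := ∀ x ∈ L, u x = y x

/-- `u` is a minimizer of the constrained functional `F_H^{con}`. -/
def IsMinimizer (H : WHypergraph V m) (p : ℝ) (L : Finset V) (y u : V → ℝ) : Prop :=
  Admissible L y u ∧ ∀ v : V → ℝ, Admissible L y v → FH H p u ≤ FH H p v

/-- Connectivity of a hypergraph: any two vertices are linked by a chain of hyperedges
with consecutive nonempty intersections. -/
def WHypergraph.Connected [DecidableEq V] (H : WHypergraph V m) : Prop :=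
  ∀ x y : V, ∃ l : ℕ, ∃ ks : Fin (l + 1) → Fin m,
    x ∈ H.e (ks 0) ∧ y ∈ H.e (ks (Fin.last l)) ∧
    ∀ i : Fin l, (H.e (ks i.castSucc) ∩ H.e (ks i.succ)).Nonempty

/-- The set `D(u)` of vertices whose values are rigid: labeled vertices together with the
unlabeled vertices at which every sufficiently small perturbation strictly increases `F_H`. -/
def Dset [DecidableEq V] (H : WHypergraph V m) (p : ℝ) (L : Finset V) (u : V → ℝ) : Set V :=
  {x | x ∈ L ∨ (x ∉ L ∧ ∃ δ > (0 : ℝ), ∀ ε : ℝ, 0 < |ε| → |ε| < δ →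
    FH H p u < FH H p (Function.update u x (u x + ε)))}

/-- φ_p(s) = |s|^{p-2} s for s ≠ 0 and φ_p(0) = 0. -/
noncomputable def phiP (p s : ℝ) : ℝ := if s = 0 then 0 else |s| ^ (p - 2) * s

/-- The simplified hypergraph p-Laplacian operator. -/
noncomputable def LpH [DecidableEq V] (H : WHypergraph V m) (p : ℝ) (u : V → ℝ) (x : V) : ℝ :=
  ∑ k ∈ Finset.univ.filter (fun k => x ∈ H.e k),
    H.w k * phiP p ((H.e k).sup' (H.e_nonempty k) u + (H.e k).inf' (H.e_nonempty k) u - 2 * u x)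

/-- The indicator vector `𝟙_x ∈ ℝ^V`. -/
def ind [DecidableEq V] (x : V) : V → ℝ := fun z => if z = x then 1 else 0

/-- Euclidean inner product on `ℝ^V`. -/
noncomputable def ip (b u : V → ℝ) : ℝ := ∑ x : V, b x * u x

/-- `B_e = conv {𝟙_{x_i} - 𝟙_{x_j} : x_i, x_j ∈ e}`. -/
def Bset [DecidableEq V] (e : Finset V) : Set (V → ℝ) :=
  convexHull ℝ {b | ∃ xi ∈ e, ∃ xj ∈ e, b = ind xi - ind xj}

/-!
If `x ∉ L` is not a maximum point of `u` on any hyperedge containing it, then raising `u x`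
slightly keeps it inside `[min_{e_k} u, max_{e_k} u]` for every such hyperedge, so no oscillation
and hence no term of `F_H` grows. This contradicts the strict increase required at points of
`D(u)`. Lowering `u x` handles the minimum in the same way.
-/

open Finset Filter Topology

lemma abs_sub_le_osc (H : WHypergraph V m) (u : V → ℝ) (k : Fin m) {a b : V}
    (ha : a ∈ H.e k) (hb : b ∈ H.e k) : |u a - u b| ≤ osc H u k :=
  le_sup' (fun q : V × V => |u q.1 - u q.2|) (mem_product.2 ⟨ha, hb⟩ : (a, b) ∈ H.e k ×ˢ H.e k)

lemma osc_nonneg (H : WHypergraph V m) (u : V → ℝ) (k : Fin m) : 0 ≤ osc H u k := by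
  obtain ⟨a, ha⟩ := H.e_nonempty k
  simpa using abs_sub_le_osc H u k ha ha

lemma sup'_sub_inf'_le_osc (H : WHypergraph V m) (u : V → ℝ) (k : Fin m) :
    (H.e k).sup' (H.e_nonempty k) u - (H.e k).inf' (H.e_nonempty k) u ≤ osc H u k := by
  obtain ⟨a, ha, hsa⟩ := exists_mem_eq_sup' (H.e_nonempty k) u
  obtain ⟨b, hb, hib⟩ := exists_mem_eq_inf' (H.e_nonempty k) u
  rw [hsa, hib]
  exact (le_abs_self _).trans (abs_sub_le_osc H u k ha hb)

lemma osc_le_of_forall_mem_Icc (H : WHypergraph V m) (v : V → ℝ) (k : Fin m) {a b : ℝ}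
    (h : ∀ z ∈ H.e k, v z ∈ Set.Icc a b) : osc H v k ≤ b - a := by
  refine sup'_le _ _ fun q hq => ?_
  obtain ⟨hq₁, hq₂⟩ := mem_product.1 hq
  obtain ⟨h₁, h₂⟩ := h _ hq₁
  obtain ⟨h₃, h₄⟩ := h _ hq₂
  rw [abs_sub_le_iff]
  constructor <;> linarith

def valueRange (H : WHypergraph V m) (u : V → ℝ) (k : Fin m) : Set ℝ :=
  Set.Icc ((H.e k).inf' (H.e_nonempty k) u) ((H.e k).sup' (H.e_nonempty k) u)

lemma osc_update_le [DecidableEq V] (H : WHypergraph V m) (u : V → ℝ) (k : Fin m) (x : V)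
    {c : ℝ} (hc : c ∈ valueRange H u k) :
    osc H (Function.update u x c) k ≤ osc H u k := by
  refine (osc_le_of_forall_mem_Icc H _ k fun z hz => ?_).trans (sup'_sub_inf'_le_osc H u k)
  rcases eq_or_ne z x with rfl | hzx
  · rwa [Function.update_self]
  · rw [Function.update_of_ne hzx]
    exact ⟨inf'_le u hz, le_sup' u hz⟩

lemma osc_update_of_notMem [DecidableEq V] (H : WHypergraph V m) (u : V → ℝ) (k : Fin m)
    {x : V} (c : ℝ) (hx : x ∉ H.e k) : osc H (Function.update u x c) k = osc H u k := by
  refine sup'_congr _ rfl fun q hq => ?_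
  obtain ⟨hq₁, hq₂⟩ := mem_product.1 hq
  rw [Function.update_of_ne (ne_of_mem_of_not_mem hq₁ hx),
    Function.update_of_ne (ne_of_mem_of_not_mem hq₂ hx)]

lemma FH_update_le [DecidableEq V] (H : WHypergraph V m) {p : ℝ} (hp : 0 ≤ p) (u : V → ℝ)
    (x : V) {c : ℝ} (hc : ∀ k, x ∈ H.e k → c ∈ valueRange H u k) :
    FH H p (Function.update u x c) ≤ FH H p u := by
  refine sum_le_sum fun k _ => mul_le_mul_of_nonneg_left ?_ (H.w_pos k).le
  by_cases hk : x ∈ H.e k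
  · exact Real.rpow_le_rpow (osc_nonneg _ _ _) (osc_update_le H u k x (hc k hk)) hp
  · rw [osc_update_of_notMem H u k c hk]

lemma eventually_FH_update_le [DecidableEq V] (H : WHypergraph V m) {p : ℝ} (hp : 0 ≤ p)
    (u : V → ℝ) (x : V) {l : Filter ℝ} (hl : ∀ k, x ∈ H.e k → valueRange H u k ∈ l) :
    ∀ᶠ c in l, FH H p (Function.update u x c) ≤ FH H p u := by
  have hmem : ∀ k, ∀ᶠ c in l, x ∈ H.e k → c ∈ valueRange H u k := by
    intro k
    by_cases hk : x ∈ H.e k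
    · filter_upwards [hl k hk] with c hc _ using hc
    · exact .of_forall fun _ h => absurd h hk
  filter_upwards [eventually_all.2 hmem] with c hc using FH_update_le H hp u x hc

lemma eventually_FH_lt_FH_update_of_mem_Dset [DecidableEq V] {H : WHypergraph V m} {p : ℝ}
    {L : Finset V} {u : V → ℝ} {x : V} (hx : x ∈ Dset H p L u) (hxL : x ∉ L) :
    ∀ᶠ c in 𝓝[≠] (u x), FH H p u < FH H p (Function.update u x c) := by
  obtain hx | ⟨-, δ, hδ, hlt⟩ := hx
  · exact absurd hx hxL
  filter_upwards [self_mem_nhdsWithin, nhdsWithin_le_nhds (Metric.ball_mem_nhds _ hδ)]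
    with c hne hball
  simpa using hlt (c - u x) (abs_pos.2 (sub_ne_zero.2 hne)) (by rwa [← Real.dist_eq])

lemma not_forall_valueRange_mem_of_mem_Dset [DecidableEq V] {H : WHypergraph V m} {p : ℝ}
    (hp : 0 ≤ p) {L : Finset V} {u : V → ℝ} {x : V} (hx : x ∈ Dset H p L u) (hxL : x ∉ L)
    {l : Filter ℝ} [l.NeBot] (hl : l ≤ 𝓝[≠] (u x)) :
    ¬ ∀ k, x ∈ H.e k → valueRange H u k ∈ l := by
  intro hmem
  obtain ⟨c, hlt, hle⟩ := ((eventually_FH_lt_FH_update_of_mem_Dset hx hxL).filter_mono hl).and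
    (eventually_FH_update_le H hp u x hmem) |>.exists
  exact hle.not_gt hlt

lemma exists_eq_sup'_of_mem_Dset [DecidableEq V] {H : WHypergraph V m} {p : ℝ} (hp : 0 ≤ p)
    {L : Finset V} {u : V → ℝ} {x : V} (hx : x ∈ Dset H p L u) (hxL : x ∉ L) :
    ∃ k, x ∈ H.e k ∧ u x = (H.e k).sup' (H.e_nonempty k) u := by
  by_contra! h
  exact not_forall_valueRange_mem_of_mem_Dset hp hx hxL (nhdsGT_le_nhdsNE _) fun k hk =>
    Icc_mem_nhdsGT_of_mem ⟨inf'_le u hk, (le_sup' u hk).lt_of_ne (h k hk)⟩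

lemma exists_eq_inf'_of_mem_Dset [DecidableEq V] {H : WHypergraph V m} {p : ℝ} (hp : 0 ≤ p)
    {L : Finset V} {u : V → ℝ} {x : V} (hx : x ∈ Dset H p L u) (hxL : x ∉ L) :
    ∃ k, x ∈ H.e k ∧ u x = (H.e k).inf' (H.e_nonempty k) u := by
  by_contra! h
  exact not_forall_valueRange_mem_of_mem_Dset hp hx hxL (nhdsLT_le_nhdsNE _) fun k hk =>
    Icc_mem_nhdsLT_of_mem ⟨(inf'_le u hk).lt_of_ne (h k hk).symm, le_sup' u hk⟩

theorem mem_Dset_attains_max_min_general [DecidableEq V] (H : WHypergraph V m) (p : ℝ) (hp : 1 < p)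
    (L : Finset V) (u : V → ℝ)
    (xi : V) (hxi : xi ∈ Dset H p L u) (hxiL : xi ∉ L) :
    ∃ k l : Fin m, xi ∈ H.e k ∧ xi ∈ H.e l ∧
      u xi = (H.e k).sup' (H.e_nonempty k) u ∧
      u xi = (H.e l).inf' (H.e_nonempty l) u := by
  have hp₀ : 0 ≤ p := zero_le_one.trans hp.le
  obtain ⟨k, hk, hmax⟩ := exists_eq_sup'_of_mem_Dset hp₀ hxi hxiL
  obtain ⟨l, hl, hmin⟩ := exists_eq_inf'_of_mem_Dset hp₀ hxi hxiL
  exact ⟨k, l, hk, hl, hmax, hmin⟩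

/-- at a vertex of `D(u) \ L`, the minimizer attains the maximum on some
hyperedge containing it and the minimum on some (other) hyperedge containing it. -/
theorem mem_Dset_attains_max_min [DecidableEq V] (H : WHypergraph V m) (p : ℝ) (hp : 1 < p)
    (L : Finset V) (hL : L.Nonempty) (y u : V → ℝ) (hu : IsMinimizer H p L y u)
    (xi : V) (hxi : xi ∈ Dset H p L u) (hxiL : xi ∉ L) :
    ∃ k l : Fin m, xi ∈ H.e k ∧ xi ∈ H.e l ∧
      u xi = (H.e k).sup' (H.e_nonempty k) u ∧
      u xi = (H.e l).inf' (H.e_nonempty l) u :=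
  mem_Dset_attains_max_min_general H p hp L u xi hxi hxiL
end

section
/- Let u_1 and u_2 be two minimizers of F_H^{con}. Then for every hyperedge e_k∈E, the maximal oscillations agree: max_{x_i,x_j∈e_k}|u_1(x_i)−u_1(x_j)| = max_{x_i,x_j∈e_k}|u_2(x_i)−u_2(x_j)|. -/
open Finset

variable {V : Type*} [Fintype V] {m : ℕ}

/-! If two minimizers had different oscillations on some hyperedge, their average would be
admissible and, since `t ↦ t ^ p` is strictly convex for `p > 1` while each oscillation is
convex in `u`, would have strictly smaller energy than their common minimal value. -/

namespace WHypergraph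

variable (H : WHypergraph V m)

theorem abs_sub_le_osc (u : V → ℝ) {k : Fin m} {a b : V} (ha : a ∈ H.e k) (hb : b ∈ H.e k) :
    |u a - u b| ≤ osc H u k :=
  Finset.le_sup' (fun q : V × V => |u q.1 - u q.2|)
    (Finset.mem_product.2 ⟨ha, hb⟩ : (a, b) ∈ H.e k ×ˢ H.e k)

theorem osc_nonneg (u : V → ℝ) (k : Fin m) : 0 ≤ osc H u k := by
  obtain ⟨x, hx⟩ := H.e_nonempty k
  simpa using H.abs_sub_le_osc u hx hx

theorem osc_add_le (u v : V → ℝ) (k : Fin m) : osc H (u + v) k ≤ osc H u k + osc H v k :=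
  Finset.sup'_le _ _ fun q hq => by
    obtain ⟨ha, hb⟩ := Finset.mem_product.1 hq
    calc |(u + v) q.1 - (u + v) q.2| = |(u q.1 - u q.2) + (v q.1 - v q.2)| := by
          simp only [Pi.add_apply]; ring_nf
      _ ≤ |u q.1 - u q.2| + |v q.1 - v q.2| := abs_add_le _ _
      _ ≤ osc H u k + osc H v k :=
          add_le_add (H.abs_sub_le_osc u ha hb) (H.abs_sub_le_osc v ha hb)

theorem osc_smul (c : ℝ) (u : V → ℝ) (k : Fin m) : osc H (c • u) k = |c| * osc H u k := by
  simp only [osc, Finset.mul₀_sup' (abs_nonneg c), Pi.smul_apply, smul_eq_mul, ← mul_sub,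
    abs_mul]

theorem osc_convex_comb_le {a b : ℝ} (ha : 0 ≤ a) (hb : 0 ≤ b) (u v : V → ℝ) (k : Fin m) :
    osc H (a • u + b • v) k ≤ a * osc H u k + b * osc H v k := by
  simpa only [osc_smul, abs_of_nonneg ha, abs_of_nonneg hb] using H.osc_add_le (a • u) (b • v) k

theorem osc_convex_comb_rpow_le {p a b : ℝ} (hp : 1 ≤ p) (ha : 0 ≤ a) (hb : 0 ≤ b)
    (hab : a + b = 1) (u v : V → ℝ) (k : Fin m) :
    osc H (a • u + b • v) k ^ p ≤ a * osc H u k ^ p + b * osc H v k ^ p :=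
  calc osc H (a • u + b • v) k ^ p ≤ (a * osc H u k + b * osc H v k) ^ p :=
        Real.rpow_le_rpow (H.osc_nonneg _ k) (H.osc_convex_comb_le ha hb u v k) (by linarith)
    _ ≤ a * osc H u k ^ p + b * osc H v k ^ p :=
        (convexOn_rpow hp).2 (H.osc_nonneg u k) (H.osc_nonneg v k) ha hb hab

theorem osc_convex_comb_rpow_lt {p a b : ℝ} (hp : 1 < p) (ha : 0 < a) (hb : 0 < b)
    (hab : a + b = 1) {u v : V → ℝ} {k : Fin m} (hk : osc H u k ≠ osc H v k) :
    osc H (a • u + b • v) k ^ p < a * osc H u k ^ p + b * osc H v k ^ p :=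
  calc osc H (a • u + b • v) k ^ p ≤ (a * osc H u k + b * osc H v k) ^ p :=
        Real.rpow_le_rpow (H.osc_nonneg _ k) (H.osc_convex_comb_le ha.le hb.le u v k)
          (by linarith)
    _ < a * osc H u k ^ p + b * osc H v k ^ p :=
        (strictConvexOn_rpow hp).2 (H.osc_nonneg u k) (H.osc_nonneg v k) hk ha hb hab

theorem FH_convex_comb_lt {p a b : ℝ} (hp : 1 < p) (ha : 0 < a) (hb : 0 < b)
    (hab : a + b = 1) {u v : V → ℝ} {k : Fin m} (hk : osc H u k ≠ osc H v k) :
    FH H p (a • u + b • v) < a * FH H p u + b * FH H p v := by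
  simp only [FH, Finset.mul_sum, ← Finset.sum_add_distrib]
  refine Finset.sum_lt_sum (fun j _ => ?_) ⟨k, Finset.mem_univ k, ?_⟩
  · nlinarith [H.w_pos j, H.osc_convex_comb_rpow_le hp.le ha.le hb.le hab u v j]
  · nlinarith [H.w_pos k, H.osc_convex_comb_rpow_lt hp ha hb hab hk]

end WHypergraph

omit [Fintype V] in
theorem Admissible.convex_comb {L : Finset V} {y u v : V → ℝ} (hu : Admissible L y u)
    (hv : Admissible L y v) {a b : ℝ} (hab : a + b = 1) : Admissible L y (a • u + b • v) :=
  fun x hx => by simp only [Pi.add_apply, Pi.smul_apply, smul_eq_mul, hu x hx, hv x hx,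
    ← add_mul, hab, one_mul]

theorem IsMinimizer.FH_eq {H : WHypergraph V m} {p : ℝ} {L : Finset V} {y u v : V → ℝ}
    (hu : IsMinimizer H p L y u) (hv : IsMinimizer H p L y v) : FH H p u = FH H p v :=
  le_antisymm (hu.2 v hv.1) (hv.2 u hu.1)

theorem minimizers_osc_eq_general (H : WHypergraph V m) (p : ℝ) (hp : 1 < p)
    (L : Finset V) (y u₁ u₂ : V → ℝ)
    (hu₁ : IsMinimizer H p L y u₁) (hu₂ : IsMinimizer H p L y u₂) :
    ∀ k : Fin m, osc H u₁ k = osc H u₂ k := by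
  intro k
  by_contra hk
  have hmid : Admissible L y ((1 / 2 : ℝ) • u₁ + (1 / 2 : ℝ) • u₂) :=
    hu₁.1.convex_comb hu₂.1 (add_halves 1)
  have hlt := H.FH_convex_comb_lt hp one_half_pos one_half_pos (add_halves 1) hk
  linarith [hu₁.2 _ hmid, hu₁.FH_eq hu₂]

/-- any two minimizers of `F_H^{con}` have the same maximal oscillation on
every hyperedge. -/
theorem minimizers_osc_eq (H : WHypergraph V m) (p : ℝ) (hp : 1 < p)
    (L : Finset V) (hL : L.Nonempty) (y u₁ u₂ : V → ℝ)
    (hu₁ : IsMinimizer H p L y u₁) (hu₂ : IsMinimizer H p L y u₂) :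
    ∀ k : Fin m, osc H u₁ k = osc H u₂ k :=
  minimizers_osc_eq_general H p hp L y u₁ u₂ hu₁ hu₂
end

section
/- (Comparison principle.) Let H=(V,E,W) be a connected finite hypergraph, p>1, and L⊆V nonempty. If u_1,u_2:V→ℝ satisfy L^p_H u_1(x_j)=0 and L^p_H u_2(x_j)=0 for all x_j∈V∖L, and u_1(x_j)≤u_2(x_j) for all x_j∈L, then u_1(x_j)≤u_2(x_j) for all x_j∈V. -/
open Finset

variable {V : Type*} [Fintype V] {m : ℕ}

/-! Suppose `M = max (u₁ - u₂) > 0` and, among the vertices where it is attained, let `x`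
minimize `u₂`. Then `v = u₂ + M` lies above `u₁` and touches it at `x ∉ L`. Since `φ_p` is
strictly increasing, every hyperedge term of `L^p_H u₁ (x)` is at most the corresponding term
of `L^p_H v (x)`, and both sums vanish, so the terms agree; with the minimality of `u₂ x` this
makes `x` a minimum of `u₁` and of `v` on each hyperedge through it, and then harmonicity forces
both to be constant there. So the set of such extremal contact points is closed under hyperedges,
hence is all of `V` by connectivity, which contradicts `u₁ ≤ u₂` on `L ≠ ∅`. -/

lemma phiP_neg (p s : ℝ) : phiP p (-s) = -phiP p s := by
  unfold phiP
  split_ifs with h₁ h₂ h₂ <;> simp_all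

lemma phiP_of_nonneg {p s : ℝ} (hp : 1 < p) (hs : 0 ≤ s) : phiP p s = s ^ (p - 1) := by
  rcases hs.eq_or_lt with rfl | hs
  · rw [phiP, if_pos rfl, Real.zero_rpow (by linarith)]
  · rw [phiP, if_neg hs.ne', abs_of_pos hs, ← Real.rpow_add_one hs.ne']
    ring_nf

lemma phiP_strictMono {p : ℝ} (hp : 1 < p) : StrictMono (phiP p) :=
  strictMono_of_odd_strictMonoOn_nonneg (phiP_neg p) fun s hs t ht hst => by
    rw [phiP_of_nonneg hp hs, phiP_of_nonneg hp ht]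
    exact Real.rpow_lt_rpow hs hst (by linarith)

lemma eq_of_sum_mul_eq_of_le {ι : Type*} {s : Finset ι} {w a b : ι → ℝ} {f : ℝ → ℝ}
    (hf : StrictMono f) (hw : ∀ i ∈ s, 0 < w i) (hab : ∀ i ∈ s, a i ≤ b i)
    (hsum : ∑ i ∈ s, w i * f (a i) = ∑ i ∈ s, w i * f (b i)) : ∀ i ∈ s, a i = b i := by
  have hle : ∀ i ∈ s, w i * f (a i) ≤ w i * f (b i) := fun i hi =>
    mul_le_mul_of_nonneg_left (hf.monotone (hab i hi)) (hw i hi).le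
  intro i hi
  exact hf.injective <| mul_left_cancel₀ (hw i hi).ne' <|
    (Finset.sum_eq_sum_iff_of_le hle).mp hsum i hi

lemma exists_isMax_isMin_on_level {α : Type*} [Fintype α] [Nonempty α] (f g : α → ℝ) :
    ∃ x, (∀ y, f y ≤ f x) ∧ ∀ y, f y = f x → g x ≤ g y := by
  obtain ⟨x₀, -, hx₀⟩ := Finset.exists_max_image Finset.univ f Finset.univ_nonempty
  obtain ⟨x, hx, hmin⟩ := Finset.exists_min_image (Finset.univ.filter (f · = f x₀)) g
    ⟨x₀, by simp⟩
  simp only [Finset.mem_filter, Finset.mem_univ, true_and] at hx hmin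
  exact ⟨x, fun y => hx ▸ hx₀ y (Finset.mem_univ y), fun y hy => hmin y (hy.trans hx)⟩

namespace WHypergraph

noncomputable def edgeGap (H : WHypergraph V m) (u : V → ℝ) (x : V) (k : Fin m) : ℝ :=
  (H.e k).sup' (H.e_nonempty k) u + (H.e k).inf' (H.e_nonempty k) u - 2 * u x

variable {H : WHypergraph V m}

lemma edgeGap_add_const (u : V → ℝ) (c : ℝ) (x : V) (k : Fin m) :
    H.edgeGap (fun y => u y + c) x k = H.edgeGap u x k := by
  have hinf : (H.e k).inf' (H.e_nonempty k) (fun y => u y + c) =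
      (H.e k).inf' (H.e_nonempty k) u + c :=
    (map_finset_inf' (OrderIso.addRight c) (H.e_nonempty k) u).symm
  rw [edgeGap, edgeGap, hinf, ← Finset.sup'_add]
  ring

lemma edgeGap_mono {u v : V → ℝ} {x : V} (huv : ∀ y, u y ≤ v y) (hx : u x = v x) (k : Fin m) :
    H.edgeGap u x k ≤ H.edgeGap v x k := by
  have hsup := Finset.sup'_mono_fun (hs := H.e_nonempty k) fun y _ => huv y
  have hinf := Finset.inf'_mono_fun (hs := H.e_nonempty k) fun y _ => huv y
  rw [edgeGap, edgeGap, hx]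
  linarith

lemma Connected.mem_of_closed [DecidableEq V] (hconn : H.Connected) {S : Set V} {x : V}
    (hx : x ∈ S) (hS : ∀ y ∈ S, ∀ k, y ∈ H.e k → ∀ z ∈ H.e k, z ∈ S) (y : V) : y ∈ S := by
  obtain ⟨l, ks, hx₀, hy, hchain⟩ := hconn x y
  have hsub : ∀ i, ∀ z ∈ H.e (ks i), z ∈ S := by
    refine Fin.induction (hS x hx _ hx₀) fun i ih => ?_
    obtain ⟨z, hz⟩ := hchain i
    rw [Finset.mem_inter] at hz
    exact hS z (ih z hz.1) _ hz.2
  exact hsub _ y hy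

end WHypergraph

section LpH

variable [DecidableEq V] {H : WHypergraph V m} {p : ℝ} {x : V}

lemma LpH_eq_sum_edgeGap (p : ℝ) (u : V → ℝ) (x : V) :
    LpH H p u x = ∑ k ∈ Finset.univ.filter (x ∈ H.e ·), H.w k * phiP p (H.edgeGap u x k) :=
  rfl

lemma LpH_add_const (p : ℝ) (u : V → ℝ) (c : ℝ) (x : V) :
    LpH H p (fun y => u y + c) x = LpH H p u x := by
  simp only [LpH_eq_sum_edgeGap, WHypergraph.edgeGap_add_const]

lemma edgeGap_eq_of_LpH_eq (hp : 1 < p) {u v : V → ℝ} (huv : ∀ y, u y ≤ v y) (hx : u x = v x)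
    (heq : LpH H p u x = LpH H p v x) {k : Fin m} (hk : x ∈ H.e k) :
    H.edgeGap u x k = H.edgeGap v x k :=
  eq_of_sum_mul_eq_of_le (phiP_strictMono hp) (fun k _ => H.w_pos k)
    (fun k _ => WHypergraph.edgeGap_mono huv hx k) heq k (by simpa using hk)

lemma eq_on_edge_of_LpH_eq_zero (hp : 1 < p) {u : V → ℝ} (hu : LpH H p u x = 0)
    (hmin : ∀ k, x ∈ H.e k → (H.e k).inf' (H.e_nonempty k) u = u x)
    {k : Fin m} (hk : x ∈ H.e k) {y : V} (hy : y ∈ H.e k) : u y = u x := by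
  have hgap_nonneg : ∀ j, x ∈ H.e j → 0 ≤ H.edgeGap u x j := fun j hj => by
    have := Finset.le_sup' u hj
    rw [WHypergraph.edgeGap, hmin j hj]
    linarith
  have hgap_zero : 0 = H.edgeGap u x k := by
    refine eq_of_sum_mul_eq_of_le (s := Finset.univ.filter (x ∈ H.e ·)) (a := fun _ => 0)
      (phiP_strictMono hp) (fun j _ => H.w_pos j) (fun j hj => hgap_nonneg j (by simpa using hj))
      ?_ k (by simpa using hk)
    rw [← LpH_eq_sum_edgeGap, hu]
    simp [phiP]
  have := Finset.le_sup' u hy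
  have := Finset.inf'_le u hy
  rw [WHypergraph.edgeGap, hmin k hk] at hgap_zero
  rw [hmin k hk] at this
  linarith

lemma eq_on_edge_of_touches_below (hp : 1 < p) {u v : V → ℝ} (hu : LpH H p u x = 0)
    (hv : LpH H p v x = 0) (huv : ∀ y, u y ≤ v y) (hx : u x = v x)
    (hmin : ∀ y, u y = v y → v x ≤ v y) {k : Fin m} (hk : x ∈ H.e k) {y : V}
    (hy : y ∈ H.e k) : u y = u x ∧ v y = v x := by
  have hinf : ∀ j, x ∈ H.e j →
      (H.e j).inf' (H.e_nonempty j) u = u x ∧ (H.e j).inf' (H.e_nonempty j) v = v x := by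
    intro j hj
    have hgap := edgeGap_eq_of_LpH_eq hp huv hx (hu.trans hv.symm) hj
    have hsup := Finset.sup'_mono_fun (hs := H.e_nonempty j) fun y _ => huv y
    have hinf := Finset.inf'_mono_fun (hs := H.e_nonempty j) fun y _ => huv y
    rw [WHypergraph.edgeGap, WHypergraph.edgeGap, hx] at hgap
    obtain ⟨z, hz, hzv⟩ := Finset.exists_mem_eq_inf' (H.e_nonempty j) v
    -- the minimum of `v` on the edge is attained at a contact point of `u` and `v`
    have hz_touch : u z = v z := le_antisymm (huv z) (by linarith [Finset.inf'_le u hz])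
    have := hmin z hz_touch
    have := Finset.inf'_le v hj
    constructor <;> linarith
  exact ⟨eq_on_edge_of_LpH_eq_zero hp hu (fun j hj => (hinf j hj).1) hk hy,
    eq_on_edge_of_LpH_eq_zero hp hv (fun j hj => (hinf j hj).2) hk hy⟩

end LpH

/-- Comparison principle: if `u₁, u₂` both satisfy `L^p_H u = 0` on `V \ L`
and `u₁ ≤ u₂` on `L`, then `u₁ ≤ u₂` on all of `V`. -/
theorem comparison_principle [DecidableEq V] (H : WHypergraph V m) (hconn : H.Connected)
    (p : ℝ) (hp : 1 < p) (L : Finset V) (hL : L.Nonempty) (u₁ u₂ : V → ℝ)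
    (h₁ : ∀ x : V, x ∉ L → LpH H p u₁ x = 0) (h₂ : ∀ x : V, x ∉ L → LpH H p u₂ x = 0)
    (hle : ∀ x ∈ L, u₁ x ≤ u₂ x) :
    ∀ x : V, u₁ x ≤ u₂ x := by
  intro x₀
  by_contra! hx₀
  have : Nonempty V := ⟨x₀⟩
  obtain ⟨x, hmax, hmin⟩ := exists_isMax_isMin_on_level (fun y => u₁ y - u₂ y) u₂
  set M := u₁ x - u₂ x
  have hM : 0 < M := by linarith [hmax x₀]
  set v : V → ℝ := fun y => u₂ y + M
  have hv : ∀ y ∉ L, LpH H p v y = 0 := fun y hy => (LpH_add_const p u₂ M y).trans (h₂ y hy)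
  have huv : ∀ y, u₁ y ≤ v y := fun y => by linarith [hmax y]
  have hnotMem : ∀ y, u₁ y = v y → y ∉ L := fun y hy hyL => by linarith [hle y hyL]
  let S : Set V := {y | u₁ y = v y ∧ v y = v x}
  have hclosed : ∀ y ∈ S, ∀ k, y ∈ H.e k → ∀ z ∈ H.e k, z ∈ S := by
    rintro y ⟨hy, hyx⟩ k hk z hz
    have hmin' : ∀ w, u₁ w = v w → v y ≤ v w := fun w hw => by
      linarith [hmin w (by linarith)]
    obtain ⟨hz₁, hzv⟩ := eq_on_edge_of_touches_below hp (h₁ y (hnotMem y hy))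
      (hv y (hnotMem y hy)) huv hy hmin' hk hz
    exact ⟨by rw [hz₁, hzv, hy], hzv.trans hyx⟩
  obtain ⟨y, hyL⟩ := hL
  exact hnotMem y (hconn.mem_of_closed (S := S) ⟨by simp [v, M], rfl⟩ hclosed y).1 hyL
end

section
/- Let H=(V,E,W) be a finite hypergraph in which every vertex belongs to at least one hyperedge, let L⊆V be nonempty with labels y:L→ℝ, and consider the case p=2. Define the iteration u^{k+1}(x_i)= (1/(2·Σ_{k:x_i∈e_k}w_k))·Σ_{k:x_i∈e_k} w_k·( max_{x_j∈e_k}u^k(x_j) + min_{x_j∈e_k}u^k(x_j) ) for x_i∈V∖L and u^{k+1}(x_i)=y_i for x_i∈L, started from u^0(x_i)=min_{x_j∈L}y_j for x_i∈V∖L and u^0(x_i)=y_i for x_i∈L. Then for every k≥0 and every x_i∈V: min_{x_j∈L}y_j ≤ u^k(x_i) ≤ max_{x_j∈L}y_j and u^{k+1}(x_i) ≥ u^k(x_i); consequently, for each x_i∈V the sequence (u^k(x_i))_{k≥0} converges. -/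
open Finset

variable {V : Type*} [Fintype V] {m : ℕ}

/-!
The update is order preserving, and at an unlabeled vertex it is a weighted mean of the
midranges `(max + min) / 2` of `u` over the incident hyperedges, so it preserves the box of
functions with values between the extreme labels. The initial guess lies below its own update,
so monotonicity propagates along the iteration, and a bounded monotone sequence converges.
-/

theorem sup'_add_inf'_div_two_mem_Icc {ι : Type*} {s : Finset ι} (hs : s.Nonempty)
    {u : ι → ℝ} {a b : ℝ} (hu : ∀ x, u x ∈ Set.Icc a b) : (s.sup' hs u + s.inf' hs u) / 2 ∈ Set.Icc a b := by
  obtain ⟨z, hz⟩ := hs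
  have hsup : s.sup' ⟨z, hz⟩ u ∈ Set.Icc a b :=
    ⟨(hu z).1.trans (le_sup' u hz), sup'_le _ _ fun x _ => (hu x).2⟩
  have hinf : s.inf' ⟨z, hz⟩ u ∈ Set.Icc a b :=
    ⟨le_inf' _ _ fun x _ => (hu x).1, (inf'_le u hz).trans (hu z).2⟩
  constructor <;> linarith [hsup.1, hsup.2, hinf.1, hinf.2]

namespace WHypergraph

variable [DecidableEq V]

def incidentEdges (H : WHypergraph V m) (x : V) : Finset (Fin m) :=
  univ.filter (fun k => x ∈ H.e k)

theorem sum_w_incidentEdges_pos (H : WHypergraph V m) {x : V} (hx : ∃ k, x ∈ H.e k) :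
    0 < ∑ k ∈ H.incidentEdges x, H.w k := by
  obtain ⟨k, hk⟩ := hx
  exact sum_pos (fun k _ => H.w_pos k) ⟨k, mem_filter.2 ⟨mem_univ k, hk⟩⟩

noncomputable def labelStep (H : WHypergraph V m) (L : Finset V) (y u : V → ℝ) : V → ℝ :=
  fun x => if x ∈ L then y x
    else (1 / (2 * ∑ k ∈ H.incidentEdges x, H.w k)) *
      ∑ k ∈ H.incidentEdges x, H.w k * ((H.e k).sup' (H.e_nonempty k) u +
        (H.e k).inf' (H.e_nonempty k) u)

theorem labelStep_mono (H : WHypergraph V m) (L : Finset V) (y : V → ℝ) :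
    Monotone (H.labelStep L y) := by
  intro u v huv x
  unfold labelStep
  split
  · rfl
  · gcongr with k _ z _ z _
    · exact one_div_nonneg.2 (mul_nonneg zero_le_two (sum_nonneg fun k _ => (H.w_pos k).le))
    · exact (H.w_pos k).le
    all_goals exact huv z

theorem labelStep_mem_Icc (H : WHypergraph V m) (hcov : ∀ x : V, ∃ k : Fin m, x ∈ H.e k)
    {L : Finset V} {y u : V → ℝ} {a b : ℝ} (hy : ∀ x ∈ L, y x ∈ Set.Icc a b)
    (hu : ∀ x, u x ∈ Set.Icc a b) (x : V) : H.labelStep L y u x ∈ Set.Icc a b := by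
  unfold labelStep
  split
  · exact hy x ‹_›
  · have hmean : (1 / (2 * ∑ k ∈ H.incidentEdges x, H.w k)) *
        ∑ k ∈ H.incidentEdges x, H.w k * ((H.e k).sup' (H.e_nonempty k) u +
          (H.e k).inf' (H.e_nonempty k) u) =
        (H.incidentEdges x).centerMass H.w
          (fun k => ((H.e k).sup' (H.e_nonempty k) u + (H.e k).inf' (H.e_nonempty k) u) / 2) := by
      simp only [centerMass, smul_eq_mul, ← mul_div_assoc, ← Finset.sum_div]
      ring
    rw [hmean]
    exact (convex_Icc a b).centerMass_mem (fun k _ => (H.w_pos k).le)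
      (H.sum_w_incidentEdges_pos (hcov x))
      (fun k _ => sup'_add_inf'_div_two_mem_Icc _ hu)

end WHypergraph

/-- the fixed-point iteration for the simplified hypergraph 2-Laplacian
equation, started from the smallest label, is bounded between the extreme labels,
monotone nondecreasing, and hence pointwise convergent. -/
theorem iteration_monotone_convergent [DecidableEq V] (H : WHypergraph V m)
    (hcov : ∀ x : V, ∃ k : Fin m, x ∈ H.e k)
    (L : Finset V) (hL : L.Nonempty) (y : V → ℝ) (u : ℕ → V → ℝ)
    (h0 : ∀ x : V, u 0 x = if x ∈ L then y x else L.inf' hL y)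
    (hstep : ∀ (n : ℕ) (x : V), u (n + 1) x =
      if x ∈ L then y x
      else (1 / (2 * ∑ k ∈ Finset.univ.filter (fun k => x ∈ H.e k), H.w k)) *
        ∑ k ∈ Finset.univ.filter (fun k => x ∈ H.e k),
          H.w k * ((H.e k).sup' (H.e_nonempty k) (u n) +
                   (H.e k).inf' (H.e_nonempty k) (u n))) :
    (∀ (n : ℕ) (x : V),
      L.inf' hL y ≤ u n x ∧ u n x ≤ L.sup' hL y ∧ u n x ≤ u (n + 1) x) ∧
    ∀ x : V, ∃ l : ℝ, Filter.Tendsto (fun n => u n x) Filter.atTop (nhds l) := by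
  have hsucc : ∀ n, u (n + 1) = H.labelStep L y (u n) := fun n => funext (hstep n)
  have hy : ∀ x ∈ L, y x ∈ Set.Icc (L.inf' hL y) (L.sup' hL y) :=
    fun x hx => ⟨inf'_le y hx, le_sup' y hx⟩
  have hbound : ∀ n x, u n x ∈ Set.Icc (L.inf' hL y) (L.sup' hL y) := by
    intro n
    induction n with
    | zero =>
      intro x
      rw [h0]
      split
      · exact hy x ‹_›
      · obtain ⟨z, hz⟩ := hL
        exact ⟨le_rfl, (hy z hz).1.trans (hy z hz).2⟩
    | succ n ih => rw [hsucc]; exact H.labelStep_mem_Icc hcov hy ih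
  have hmono : ∀ n, u n ≤ u (n + 1) := by
    intro n
    induction n with
    | zero =>
      intro x
      rw [h0, hsucc]
      split
      · simp only [WHypergraph.labelStep, if_pos ‹x ∈ L›, le_rfl]
      · exact (H.labelStep_mem_Icc hcov hy (hbound 0) x).1
    | succ n ih => rw [hsucc, hsucc (n + 1)]; exact H.labelStep_mono L y ih
  refine ⟨fun n x => ⟨(hbound n x).1, (hbound n x).2, hmono n x⟩, fun x => ?_⟩
  have hbdd : BddAbove (Set.range fun n => u n x) := ⟨L.sup' hL y, by
    rintro _ ⟨n, rfl⟩
    exact (hbound n x).2⟩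
  exact ⟨_, tendsto_atTop_ciSup (monotone_nat_of_le_succ fun n => hmono n x) hbdd⟩
end
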